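/- arXiv:2002.10288 — 5 statements merged into one kernel-verified Lean document; each statement's English description precedes it below -/
import Mathlib

section
/- Let k be even and let G, G̃ be connected k-uniform hypergraphs with G = G_0(v_2) ⋄ H(u) and G̃ = G_0(v_1) ⋄ H(u), where v_1 ≠ v_2 are vertices of G_0 and u is a vertex of H (i.e., G̃ is obtained from G by relocating the branch H from v_2 to v_1). If G has a first eigenvector x with |x_{v_1}| ≥ |x_{v_2}|, then λ_min(G̃) ≤ λ_min(G). Moreover if additionally x_{v_2} ≠ 0, the inequality is strict. -/
open Finset BigOperators

variable {V : Type*}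

/-- A `k`-uniform hypergraph given by its edge set: every edge has exactly `k` vertices. -/
def Uniform [DecidableEq V] (E : Finset (Finset V)) (k : ℕ) : Prop :=
  ∀ e ∈ E, e.card = k

/-- Two vertices are adjacent if some edge contains both. -/
def HAdj [DecidableEq V] (E : Finset (Finset V)) (a b : V) : Prop :=
  a ≠ b ∧ ∃ e ∈ E, a ∈ e ∧ b ∈ e

/-- The hypergraph is connected: every two vertices are joined by a walk. -/
def HConnected [DecidableEq V] (E : Finset (Finset V)) : Prop :=
  ∀ a b : V, Relation.ReflTransGen (HAdj E) a b

/-- `(lam, x)` satisfies the H-eigen equations of the adjacency tensor: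
for each vertex `v`, `∑_{e ∋ v} ∏_{w ∈ e \ {v}} x w = lam * (x v)^(k-1)`. -/
def isEig [Fintype V] [DecidableEq V] (E : Finset (Finset V)) (k : ℕ) (lam : ℝ) (x : V → ℝ) :
    Prop :=
  ∀ v : V, (∑ e ∈ E.filter (fun e => v ∈ e), ∏ w ∈ e.erase v, x w) = lam * x v ^ (k - 1)

/-- The set of H-eigenvalues of the adjacency tensor of the hypergraph. -/
def specH [Fintype V] [DecidableEq V] (E : Finset (Finset V)) (k : ℕ) : Set ℝ :=
  {lam | ∃ x : V → ℝ, x ≠ 0 ∧ isEig E k lam x}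

/-- The least H-eigenvalue of the adjacency tensor. -/
noncomputable def lamMin [Fintype V] [DecidableEq V] (E : Finset (Finset V)) (k : ℕ) : ℝ :=
  sInf (specH E k)

/-- A first eigenvector: a real eigenvector associated with the least H-eigenvalue. -/
def IsFirstEigvec [Fintype V] [DecidableEq V] (E : Finset (Finset V)) (k : ℕ) (x : V → ℝ) :
    Prop :=
  x ≠ 0 ∧ isEig E k (lamMin E k) x

/-!
For even `k`, `λ_min` is the minimum of `k Q(x) / ∑ x_v^k` with `Q(x) = ∑_e ∏_{v ∈ e} x_v`, and a
vector attaining it is an eigenvector (its partial derivatives vanish). Keep the first eigenvector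
`x` of `G` on `G₀` and multiply it by a sign `σ` on the branch: the norm and the branch edges
avoiding the root are unchanged, while the edges at the root contribute `σ x_{v₁} S` to `Q` in
`G̃` instead of `x_{v₂} S` in `G`, where `S = ∑_{e ∋ v₂} ∏_{e ∖ v₂} x`. A suitable sign gives
`σ x_{v₁} S ≤ x_{v₂} S`, hence `λ_min(G̃) ≤ λ_min(G)`.

If equality held, the new vector would be a first eigenvector of `G̃`, and comparing its
eigen-equation at `v₂` with that of `x` forces `S = 0`. Then `x` restricted to `G₀` attains the
quotient too, and filling the rest of an edge at `v₂` with a small value `t` of the right sign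
lowers it: the gain `x_{v₂} t^{k-1}` is of odd order, the cost `(k-1) t^k` of higher order.
-/

/-- `k` times this is the paper's form `x^T (A x^{k-1}) = k ∑_{e ∈ E} ∏_{v ∈ e} x_v`. -/
def edgeForm (E : Finset (Finset V)) (x : V → ℝ) : ℝ :=
  ∑ e ∈ E, ∏ w ∈ e, x w

def powerSum [Fintype V] (k : ℕ) (x : V → ℝ) : ℝ :=
  ∑ v, x v ^ k

/-- The `v`-th entry of `A x^{k-1}`. -/
def linkSum [DecidableEq V] (E : Finset (Finset V)) (v : V) (x : V → ℝ) : ℝ :=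
  ∑ e ∈ E with v ∈ e, ∏ w ∈ e.erase v, x w

section Forms

variable {E F : Finset (Finset V)} {k : ℕ} {x y : V → ℝ}

lemma edgeForm_congr (h : ∀ e ∈ E, ∀ w ∈ e, x w = y w) : edgeForm E x = edgeForm E y :=
  sum_congr rfl fun e he => prod_congr rfl (h e he)

lemma disjoint_of_forall_exists_notMem {W : Finset V} (hE : ∀ e ∈ E, e ⊆ W)
    (hF : ∀ f ∈ F, ∃ w ∈ f, w ∉ W) : Disjoint E F :=
  disjoint_left.mpr fun f hfE hfF => by
    obtain ⟨w, hw, hwW⟩ := hF f hfF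
    exact hwW (hE f hfE hw)

variable [DecidableEq V]

lemma edgeForm_union (h : Disjoint E F) (x : V → ℝ) :
    edgeForm (E ∪ F) x = edgeForm E x + edgeForm F x :=
  sum_union h

lemma linkSum_union (h : Disjoint E F) (v : V) (x : V → ℝ) :
    linkSum (E ∪ F) v x = linkSum E v x + linkSum F v x := by
  rw [linkSum, filter_union, sum_union (disjoint_filter_filter h)]; rfl

lemma linkSum_eq_zero_of_notMem (h : ∀ e ∈ E, v ∉ e) (x : V → ℝ) : linkSum E v x = 0 := by
  rw [linkSum, filter_false_of_mem h, sum_empty]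

lemma linkSum_congr (h : ∀ e ∈ E, ∀ w ∈ e, x w = y w) (v : V) : linkSum E v x = linkSum E v y :=
  sum_congr rfl fun e he => prod_congr rfl fun w hw =>
    h e (mem_of_mem_filter e he) w (mem_of_mem_erase hw)

lemma edgeForm_eq_mul_linkSum_add (E : Finset (Finset V)) (v : V) (x : V → ℝ) :
    edgeForm E x = x v * linkSum E v x + edgeForm (E.filter (v ∉ ·)) x := by
  rw [edgeForm, ← sum_filter_add_sum_filter_not E (v ∈ ·), linkSum, mul_sum, edgeForm]
  congr 1
  exact sum_congr rfl fun e he => (mul_prod_erase e x (mem_filter.mp he).2).symm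

lemma sum_mul_linkSum (E : Finset (Finset V)) (W : Finset V) (x : V → ℝ) :
    ∑ w ∈ W, x w * linkSum E w x = ∑ e ∈ E, ((e ∩ W).card : ℝ) * ∏ w ∈ e, x w := by
  simp_rw [linkSum, mul_sum, sum_filter]
  rw [sum_comm]
  refine sum_congr rfl fun e _ => ?_
  rw [sum_ite_mem, inter_comm, ← nsmul_eq_mul, ← sum_const]
  exact sum_congr rfl fun w hw => mul_prod_erase e x (mem_inter.mp hw).1

lemma edgeForm_smul (hU : Uniform E k) (c : ℝ) (x : V → ℝ) :
    edgeForm E (c • x) = c ^ k * edgeForm E x := by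
  simp only [edgeForm, Pi.smul_apply, smul_eq_mul, prod_mul_distrib, prod_const, mul_sum]
  exact sum_congr rfl fun e he => by rw [hU e he]

lemma edgeForm_zero (hU : Uniform E k) (hk0 : 0 < k) : edgeForm E (0 : V → ℝ) = 0 := by
  simpa [zero_pow hk0.ne'] using edgeForm_smul hU 0 (0 : V → ℝ)

lemma edgeForm_update_add (E : Finset (Finset V)) (x : V → ℝ) (v : V) (t : ℝ) :
    edgeForm E (Function.update x v (x v + t)) = edgeForm E x + t * linkSum E v x := by
  set y := Function.update x v (x v + t)
  have hlink : linkSum E v y = linkSum E v x :=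
    sum_congr rfl fun e _ => prod_congr rfl fun w hw =>
      Function.update_of_ne (ne_of_mem_erase hw) _ _
  have hrest : edgeForm (E.filter (v ∉ ·)) y = edgeForm (E.filter (v ∉ ·)) x :=
    edgeForm_congr fun e he w hw =>
      Function.update_of_ne (by rintro rfl; exact (mem_filter.mp he).2 hw) _ _
  rw [edgeForm_eq_mul_linkSum_add E v y, edgeForm_eq_mul_linkSum_add E v x, hlink, hrest]
  simp only [y, Function.update_self]
  ring

lemma isEig.mul_sum_pow [Fintype V] {lam : ℝ} (h : isEig E k lam x) (hk0 : 0 < k)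
    (W : Finset V) :
    lam * ∑ w ∈ W, x w ^ k = ∑ e ∈ E, ((e ∩ W).card : ℝ) * ∏ w ∈ e, x w := by
  rw [← sum_mul_linkSum, mul_sum]
  refine sum_congr rfl fun w _ => ?_
  rw [linkSum, h w, mul_left_comm, ← pow_succ', Nat.sub_add_cancel hk0]

lemma isEig.natCast_mul_edgeForm [Fintype V] {lam : ℝ} (h : isEig E k lam x) (hk0 : 0 < k)
    (hU : Uniform E k) : (k : ℝ) * edgeForm E x = lam * powerSum k x := by
  rw [powerSum, h.mul_sum_pow hk0, edgeForm, mul_sum]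
  exact sum_congr rfl fun e he => by rw [inter_univ, hU e he]

end Forms

section PowerSum

variable [Fintype V] {k : ℕ}

lemma powerSum_pos (hk : Even k) {x : V → ℝ} (hx : x ≠ 0) : 0 < powerSum k x := by
  obtain ⟨v, hv⟩ := Function.ne_iff.mp hx
  exact sum_pos' (fun w _ => hk.pow_nonneg _) ⟨v, mem_univ v, hk.pow_pos hv⟩

lemma powerSum_smul (c : ℝ) (x : V → ℝ) : powerSum k (c • x) = c ^ k * powerSum k x := by
  simp only [powerSum, Pi.smul_apply, smul_eq_mul, mul_pow, mul_sum]

lemma powerSum_update [DecidableEq V] (k : ℕ) (x : V → ℝ) (v : V) (a : ℝ) :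
    powerSum k (Function.update x v a) = powerSum k x - x v ^ k + a ^ k := by
  simp_rw [powerSum, Function.apply_update (fun _ y => y ^ k) x v a]
  rw [sum_update_of_mem (mem_univ v), sdiff_singleton_eq_erase, sum_erase_eq_sub (mem_univ v)]
  ring

end PowerSum

section Variational

variable [Fintype V] [DecidableEq V] {E : Finset (Finset V)} {k : ℕ}

lemma exists_isMinOn_edgeForm [Nonempty V] (hk : Even k) (hk0 : 0 < k) (E : Finset (Finset V)) :
    ∃ x₀, powerSum k x₀ = 1 ∧ IsMinOn (edgeForm E) {u | powerSum k u = 1} x₀ := by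
  have hG : Continuous (powerSum (V := V) k) :=
    continuous_finsetSum _ fun v _ => (continuous_apply v).pow k
  have hQ : Continuous (edgeForm (V := V) E) :=
    continuous_finsetSum _ fun e _ => continuous_finsetProd _ fun w _ => continuous_apply w
  have hne : {u : V → ℝ | powerSum k u = 1}.Nonempty := by
    refine ⟨Pi.single (Classical.arbitrary V) 1, ?_⟩
    simp [powerSum, Pi.single_apply, apply_ite (· ^ k), zero_pow hk0.ne']
  have hbdd : Bornology.IsBounded {u : V → ℝ | powerSum k u = 1} := by
    refine (Metric.isBounded_closedBall (x := (0 : V → ℝ)) (r := 1)).subset fun u hu => ?_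
    rw [Metric.mem_closedBall, dist_zero_right, pi_norm_le_iff_of_nonneg zero_le_one]
    intro v
    have : |u v| ^ k ≤ 1 := by
      rw [hk.pow_abs, ← hu.out]
      exact single_le_sum (f := fun w => u w ^ k) (fun w _ => hk.pow_nonneg _) (mem_univ v)
    exact (pow_le_one_iff_of_nonneg (abs_nonneg _) hk0.ne').mp this
  obtain ⟨x₀, hx₀, hmin⟩ := (Metric.isCompact_of_isClosed_isBounded
    (isClosed_singleton.preimage hG) hbdd).exists_isMinOn hne hQ.continuousOn
  exact ⟨x₀, hx₀, hmin⟩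

lemma edgeForm_mul_powerSum_le_of_isMinOn (hU : Uniform E k) (hk : Even k) (hk0 : 0 < k)
    {x₀ : V → ℝ} (hmin : IsMinOn (edgeForm E) {u | powerSum k u = 1} x₀) (u : V → ℝ) :
    edgeForm E x₀ * powerSum k u ≤ edgeForm E u := by
  rcases eq_or_ne u 0 with rfl | hu
  · simp [powerSum, zero_pow hk0.ne', edgeForm_zero hU hk0]
  set c := powerSum k u
  have hc : 0 < c := powerSum_pos hk hu
  have hr : (c ^ (k : ℝ)⁻¹)⁻¹ ^ k = c⁻¹ := by rw [inv_pow, Real.rpow_inv_natCast_pow hc.le hk0.ne']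
  have h := hmin (a := (c ^ (k : ℝ)⁻¹)⁻¹ • u) (by
    rw [Set.mem_ofPred_eq, powerSum_smul, hr, inv_mul_cancel₀ hc.ne'])
  rw [Set.mem_ofPred_eq, edgeForm_smul hU, hr] at h
  calc edgeForm E x₀ * c ≤ c⁻¹ * edgeForm E u * c := by gcongr
    _ = edgeForm E u := by field_simp

lemma isEig_of_forall_mul_powerSum_le (hk0 : 0 < k) {μ : ℝ} {x : V → ℝ}
    (hle : ∀ u, μ * powerSum k u ≤ k * edgeForm E u)
    (heq : (k : ℝ) * edgeForm E x = μ * powerSum k x) : isEig E k μ x := by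
  intro v
  set f : ℝ → ℝ := fun t =>
    k * (edgeForm E x + t * linkSum E v x) - μ * (powerSum k x - x v ^ k + (x v + t) ^ k)
  have hmin : IsLocalMin f 0 := Filter.Eventually.of_forall fun t => by
    have h := hle (Function.update x v (x v + t))
    rw [edgeForm_update_add, powerSum_update] at h
    simp only [f, zero_mul, add_zero, heq]
    linarith
  have hf : HasDerivAt f (k * linkSum E v x - μ * (k * x v ^ (k - 1))) 0 := by
    have hpow := ((hasDerivAt_id (0 : ℝ)).const_add (x v)).pow k
    simp only [id, add_zero, mul_one] at hpow
    exact (((hasDerivAt_id 0).mul_const _).const_add _ |>.const_mul _ |>.congr_deriv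
      (by simp)).sub ((hpow.const_add _).const_mul μ)
  have hk : (k : ℝ) ≠ 0 := Nat.cast_ne_zero.mpr hk0.ne'
  have := hmin.hasDerivAt_eq_zero hf
  exact mul_left_cancel₀ hk (by rw [← linkSum]; linear_combination this)

lemma exists_isEig_forall_mul_powerSum_le [Nonempty V] (hU : Uniform E k) (hk : Even k)
    (hk0 : 0 < k) :
    ∃ μ x₀, x₀ ≠ 0 ∧ isEig E k μ x₀ ∧ ∀ u, μ * powerSum k u ≤ k * edgeForm E u := by
  obtain ⟨x₀, hx₀, hmin⟩ := exists_isMinOn_edgeForm hk hk0 E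
  have hle : ∀ u, k * edgeForm E x₀ * powerSum k u ≤ k * edgeForm E u := fun u => by
    rw [mul_assoc]
    exact mul_le_mul_of_nonneg_left (edgeForm_mul_powerSum_le_of_isMinOn hU hk hk0 hmin u)
      k.cast_nonneg
  refine ⟨k * edgeForm E x₀, x₀, ?_,
    isEig_of_forall_mul_powerSum_le hk0 hle (by rw [hx₀, mul_one]), hle⟩
  rintro rfl
  simp [powerSum, zero_pow hk0.ne'] at hx₀

lemma lamMin_eq_of_isEig (hU : Uniform E k) (hk : Even k) (hk0 : 0 < k) {μ : ℝ} {x₀ : V → ℝ}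
    (hx₀ : x₀ ≠ 0) (hμ : isEig E k μ x₀) (hle : ∀ u, μ * powerSum k u ≤ k * edgeForm E u) :
    lamMin E k = μ := by
  refine IsLeast.csInf_eq ⟨⟨x₀, hx₀, hμ⟩, ?_⟩
  rintro lam ⟨u, hu, hlam⟩
  refine le_of_mul_le_mul_right ?_ (powerSum_pos hk hu)
  rw [← hlam.natCast_mul_edgeForm hk0 hU]
  exact hle u

theorem lamMin_mul_powerSum_le [Nonempty V] (hU : Uniform E k) (hk : Even k) (hk0 : 0 < k)
    (u : V → ℝ) : lamMin E k * powerSum k u ≤ k * edgeForm E u := by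
  obtain ⟨μ, x₀, hx₀, hμ, hle⟩ := exists_isEig_forall_mul_powerSum_le hU hk hk0
  rw [lamMin_eq_of_isEig hU hk hk0 hx₀ hμ hle]
  exact hle u

lemma exists_mul_pow_lt (hk : Even k) (hk0 : 0 < k) {a : ℝ} (ha : a ≠ 0) (μ : ℝ) :
    ∃ t : ℝ, k * (a * t ^ (k - 1)) < μ * ((k - 1 : ℕ) * t ^ k) := by
  obtain ⟨m, rfl⟩ : ∃ m, k = m + 1 := ⟨k - 1, by omega⟩
  have hm : Odd m := by simpa [Nat.even_add_one] using hk
  set s := (|μ| + 1)⁻¹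
  have hs : 0 < s := by positivity
  have hμs : |μ| * s < 1 := by
    rw [mul_inv_lt_iff₀ (by positivity)]; linarith
  refine ⟨-(a * s), ?_⟩
  have hpos : 0 < a ^ m * a * s ^ m := mul_pos (pow_succ a m ▸ hk.pow_pos ha) (pow_pos hs m)
  have hμ : -1 < μ * s := by nlinarith [neg_abs_le μ]
  have hm1 : (0 : ℝ) < m * (μ * s) + m + 1 := by nlinarith [(m.cast_nonneg : (0 : ℝ) ≤ m)]
  simp only [Nat.add_sub_cancel, hm.neg_pow, hk.neg_pow, mul_pow, Nat.cast_add, Nat.cast_one]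
  rw [pow_succ a, pow_succ s]
  nlinarith [mul_pos hpos hm1]

end Variational

def relocate [DecidableEq V] (v1 v2 : V) (e : Finset V) : Finset V :=
  if v2 ∈ e then insert v1 (e.erase v2) else e

def scaleOutside [DecidableEq V] (V0 : Finset V) (σ : ℝ) (x : V → ℝ) (w : V) : ℝ :=
  if w ∈ V0 then x w else σ * x w

section Relocate

variable [DecidableEq V] {v1 v2 : V} {e : Finset V}

lemma relocate_of_mem (h : v2 ∈ e) : relocate v1 v2 e = insert v1 (e.erase v2) := if_pos h

lemma relocate_of_notMem (h : v2 ∉ e) : relocate v1 v2 e = e := if_neg h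

lemma notMem_relocate (hne : v1 ≠ v2) : v2 ∉ relocate v1 v2 e := by
  unfold relocate
  split_ifs
  · simp [hne.symm]
  · assumption

lemma erase_subset_relocate : e.erase v2 ⊆ relocate v1 v2 e := by
  unfold relocate
  split_ifs
  · exact subset_insert _ _
  · exact erase_subset _ _

lemma relocate_relocate (h : v1 ∉ e) : relocate v2 v1 (relocate v1 v2 e) = e := by
  by_cases h2 : v2 ∈ e
  · rw [relocate_of_mem h2, relocate_of_mem (mem_insert_self _ _),
      erase_insert fun h' => h (mem_of_mem_erase h'), insert_erase h2]
  · rw [relocate_of_notMem h2, relocate_of_notMem h]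

lemma card_relocate (h : v1 ∉ e) : (relocate v1 v2 e).card = e.card := by
  by_cases h2 : v2 ∈ e
  · rw [relocate_of_mem h2, card_insert_of_notMem fun h' => h (mem_of_mem_erase h'),
      card_erase_add_one h2]
  · rw [relocate_of_notMem h2]

lemma uniform_union_iff {E F : Finset (Finset V)} {k : ℕ} :
    Uniform (E ∪ F) k ↔ Uniform E k ∧ Uniform F k := by
  simp only [Uniform, mem_union, or_imp, forall_and]

lemma Uniform.image_relocate {E : Finset (Finset V)} {k : ℕ} (hU : Uniform E k)
    (hv1 : ∀ e ∈ E, v1 ∉ e) : Uniform (E.image (relocate v1 v2)) k := by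
  simp only [Uniform, mem_image, forall_exists_index, and_imp, forall_apply_eq_imp_iff₂]
  exact fun e he => (card_relocate (hv1 e he)).trans (hU e he)

lemma prod_scaleOutside {V0 s : Finset V} (h : ∀ w ∈ s, w ∉ V0) (σ : ℝ) (x : V → ℝ) :
    ∏ w ∈ s, scaleOutside V0 σ x w = σ ^ s.card * ∏ w ∈ s, x w := by
  rw [← prod_const, ← prod_mul_distrib]
  exact prod_congr rfl fun w hw => if_neg (h w hw)

lemma powerSum_scaleOutside [Fintype V] {k : ℕ} {σ : ℝ} (hσ : σ ^ k = 1) (V0 : Finset V)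
    (x : V → ℝ) : powerSum k (scaleOutside V0 σ x) = powerSum k x := by
  refine sum_congr rfl fun w _ => ?_
  unfold scaleOutside
  split_ifs
  · rfl
  · rw [mul_pow, hσ, one_mul]

end Relocate

def fillEdge [DecidableEq V] (V0 e0 : Finset V) (x : V → ℝ) (t : ℝ) (w : V) : ℝ :=
  if w ∈ V0 then x w else if w ∈ e0 then t else 0

section Branch

variable [DecidableEq V] {V0 : Finset V} {v1 v2 : V} {E0 EH : Finset (Finset V)} {k : ℕ}
  {e e0 : Finset V} {w : V}

lemma eq_of_mem_branch (hEH : ∀ e ∈ EH, e ∩ V0 ⊆ {v2}) (he : e ∈ EH) (hw : w ∈ e)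
    (hwV0 : w ∈ V0) : w = v2 :=
  mem_singleton.mp (hEH e he (mem_inter_of_mem hw hwV0))

lemma notMem_of_mem_erase_branch (hEH : ∀ e ∈ EH, e ∩ V0 ⊆ {v2}) (he : e ∈ EH)
    (hw : w ∈ e.erase v2) : w ∉ V0 := fun hwV0 =>
  (mem_erase.mp hw).1 (eq_of_mem_branch hEH he (mem_of_mem_erase hw) hwV0)

lemma inter_eq_inter_singleton_of_mem_branch (hEH : ∀ e ∈ EH, e ∩ V0 ⊆ {v2}) (hv2 : v2 ∈ V0)
    (he : e ∈ EH) : e ∩ V0 = e ∩ {v2} := by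
  ext w
  simp only [mem_inter, mem_singleton]
  exact ⟨fun h => ⟨h.1, eq_of_mem_branch hEH he h.1 h.2⟩, fun h => ⟨h.1, h.2 ▸ hv2⟩⟩

lemma erase_nonempty_of_mem_branch (hUH : Uniform EH k) (hk2 : 2 ≤ k) (he : e ∈ EH) :
    (e.erase v2).Nonempty := by
  rw [← card_pos]
  have := pred_card_le_card_erase (s := e) (a := v2)
  rw [hUH e he] at this
  omega

lemma disjoint_core_branch (hE0 : ∀ e ∈ E0, e ⊆ V0) (hEH : ∀ e ∈ EH, e ∩ V0 ⊆ {v2})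
    (hUH : Uniform EH k) (hk2 : 2 ≤ k) : Disjoint E0 EH :=
  disjoint_of_forall_exists_notMem hE0 fun _ he =>
    let ⟨w, hw⟩ := erase_nonempty_of_mem_branch hUH hk2 he
    ⟨w, mem_of_mem_erase hw, notMem_of_mem_erase_branch hEH he hw⟩

lemma disjoint_core_image_relocate (hE0 : ∀ e ∈ E0, e ⊆ V0) (hEH : ∀ e ∈ EH, e ∩ V0 ⊆ {v2})
    (hUH : Uniform EH k) (hk2 : 2 ≤ k) : Disjoint E0 (EH.image (relocate v1 v2)) :=
  disjoint_of_forall_exists_notMem hE0 fun f hf => by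
    obtain ⟨e, he, rfl⟩ := mem_image.mp hf
    obtain ⟨w, hw⟩ := erase_nonempty_of_mem_branch hUH hk2 he
    exact ⟨w, erase_subset_relocate hw, notMem_of_mem_erase_branch hEH he hw⟩

lemma edgeForm_image_relocate_scaleOutside (hEH : ∀ e ∈ EH, e ∩ V0 ⊆ {v2}) (hUH : Uniform EH k)
    (hk : Even k) (hk0 : 0 < k) (hv1 : v1 ∈ V0) (hne : v1 ≠ v2) {σ : ℝ}
    (hσ : σ = 1 ∨ σ = -1) (x : V → ℝ) :
    edgeForm (EH.image (relocate v1 v2)) (scaleOutside V0 σ x)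
      = σ * (x v1 * linkSum EH v2 x) + edgeForm (EH.filter (v2 ∉ ·)) x := by
  have hv1EH : ∀ e ∈ EH, v1 ∉ e := fun e he h => hne (eq_of_mem_branch hEH he h hv1)
  have hσk : σ ^ k = 1 := by rcases hσ with rfl | rfl <;> simp [hk.neg_one_pow]
  have hσk1 : σ ^ (k - 1) = σ := by
    rcases hσ with rfl | rfl <;> simp [(Nat.Even.sub_odd hk0 hk odd_one).neg_one_pow]
  rw [edgeForm, sum_image fun a ha b hb h => by
      rw [← relocate_relocate (v2 := v2) (hv1EH a ha), h, relocate_relocate (hv1EH b hb)],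
    ← sum_filter_add_sum_filter_not EH (v2 ∈ ·), linkSum, mul_sum, mul_sum]
  congr 1
  · refine sum_congr rfl fun e he' => ?_
    obtain ⟨he, h2⟩ := mem_filter.mp he'
    rw [relocate_of_mem h2, prod_insert fun h => hv1EH e he (mem_of_mem_erase h),
      prod_scaleOutside (fun w => notMem_of_mem_erase_branch hEH he) σ x,
      card_erase_of_mem h2, hUH e he, hσk1, scaleOutside, if_pos hv1]
    ring
  · refine sum_congr rfl fun e he' => ?_
    obtain ⟨he, h2⟩ := mem_filter.mp he'
    rw [relocate_of_notMem h2, prod_scaleOutside (fun w hw => ?_) σ x, hUH e he, hσk, one_mul]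
    exact notMem_of_mem_erase_branch hEH he (mem_erase.mpr ⟨fun h => h2 (h ▸ hw), hw⟩)

lemma exists_powerSum_eq_edgeForm_relocate_le [Fintype V] (hE0 : ∀ e ∈ E0, e ⊆ V0)
    (hEH : ∀ e ∈ EH, e ∩ V0 ⊆ {v2}) (hUH : Uniform EH k) (hk : Even k) (hk0 : 0 < k)
    (hk2 : 2 ≤ k) (hv1 : v1 ∈ V0) (hne : v1 ≠ v2) {x : V → ℝ} (hge : |x v2| ≤ |x v1|) :
    ∃ y : V → ℝ, (∀ w ∈ V0, y w = x w) ∧ powerSum k y = powerSum k x ∧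
      edgeForm (E0 ∪ EH.image (relocate v1 v2)) y ≤ edgeForm (E0 ∪ EH) x := by
  set S := linkSum EH v2 x
  obtain ⟨σ, hσ, hσS⟩ : ∃ σ : ℝ, (σ = 1 ∨ σ = -1) ∧ σ * (x v1 * S) ≤ x v2 * S := by
    have : |x v2 * S| ≤ |x v1 * S| := by
      rw [abs_mul, abs_mul]; exact mul_le_mul_of_nonneg_right hge (abs_nonneg S)
    rcases le_or_gt (x v1 * S) 0 with h | h
    · exact ⟨1, .inl rfl, by linarith [abs_of_nonpos h, neg_abs_le (x v2 * S)]⟩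
    · exact ⟨-1, .inr rfl, by linarith [abs_of_pos h, neg_abs_le (x v2 * S)]⟩
  refine ⟨scaleOutside V0 σ x, fun w hw => if_pos hw,
    powerSum_scaleOutside (by rcases hσ with rfl | rfl <;> simp [hk.neg_one_pow]) V0 x, ?_⟩
  rw [edgeForm_union (disjoint_core_image_relocate hE0 hEH hUH hk2),
    edgeForm_union (disjoint_core_branch hE0 hEH hUH hk2),
    edgeForm_image_relocate_scaleOutside hEH hUH hk hk0 hv1 hne hσ,
    edgeForm_eq_mul_linkSum_add EH v2 x,
    edgeForm_congr (x := scaleOutside V0 σ x) (y := x) fun e he w hw => if_pos (hE0 e he hw)]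
  linarith

lemma linkSum_branch_eq_zero_of_isEig [Fintype V] (hE0 : ∀ e ∈ E0, e ⊆ V0)
    (hEH : ∀ e ∈ EH, e ∩ V0 ⊆ {v2}) (hUH : Uniform EH k) (hk2 : 2 ≤ k) (hv2 : v2 ∈ V0)
    (hne : v1 ≠ v2) {lam : ℝ} {x y : V → ℝ} (hx : isEig (E0 ∪ EH) k lam x)
    (hy : isEig (E0 ∪ EH.image (relocate v1 v2)) k lam y) (hyx : ∀ w ∈ V0, y w = x w) :
    linkSum EH v2 x = 0 := by
  have hx2 := hx v2
  have hy2 := hy v2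
  rw [← linkSum, linkSum_union (disjoint_core_branch hE0 hEH hUH hk2)] at hx2
  rw [← linkSum, linkSum_union (disjoint_core_image_relocate hE0 hEH hUH hk2),
    linkSum_eq_zero_of_notMem (E := EH.image _) fun f hf => by
      obtain ⟨e, -, rfl⟩ := mem_image.mp hf; exact notMem_relocate hne,
    linkSum_congr (fun e he w hw => hyx w (hE0 e he hw)), hyx v2 hv2] at hy2
  linarith

lemma isEig.mul_sum_pow_core [Fintype V] (hE0 : ∀ e ∈ E0, e ⊆ V0) (hEH : ∀ e ∈ EH, e ∩ V0 ⊆ {v2})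
    (hU : Uniform (E0 ∪ EH) k) (hk0 : 0 < k) (hk2 : 2 ≤ k) (hv2 : v2 ∈ V0)
    {lam : ℝ} {x : V → ℝ} (hx : isEig (E0 ∪ EH) k lam x) :
    lam * ∑ w ∈ V0, x w ^ k = k * edgeForm E0 x + x v2 * linkSum EH v2 x := by
  obtain ⟨hU0, hUH⟩ := uniform_union_iff.mp hU
  rw [hx.mul_sum_pow hk0, sum_union (disjoint_core_branch hE0 hEH hUH hk2), edgeForm, mul_sum,
    ← sum_singleton (fun w => x w * linkSum EH w x) v2, sum_mul_linkSum]
  congr 1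
  · exact sum_congr rfl fun e he => by rw [inter_eq_left.mpr (hE0 e he), hU0 e he]
  · exact sum_congr rfl fun e he => by rw [inter_eq_inter_singleton_of_mem_branch hEH hv2 he]

lemma edgeForm_fillEdge (hE0 : ∀ e ∈ E0, e ⊆ V0) (hEH : ∀ e ∈ EH, e ∩ V0 ⊆ {v2})
    (hUH : Uniform EH k) (hk2 : 2 ≤ k) (hv2 : v2 ∈ V0) (he0 : e0 ∈ EH) (hv2e0 : v2 ∈ e0)
    (x : V → ℝ) (t : ℝ) :
    edgeForm (E0 ∪ EH) (fillEdge V0 e0 x t) = edgeForm E0 x + x v2 * t ^ (k - 1) := by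
  rw [edgeForm_union (disjoint_core_branch hE0 hEH hUH hk2),
    edgeForm_congr (x := fillEdge V0 e0 x t) (y := x) fun e he w hw => if_pos (hE0 e he hw),
    add_right_inj, edgeForm, sum_eq_single_of_mem e0 he0 fun e he hne => ?_,
    ← mul_prod_erase e0 _ hv2e0,
    fillEdge, if_pos hv2, prod_congr rfl fun w hw => ?_, prod_const, card_erase_of_mem hv2e0,
    hUH e0 he0]
  · rw [fillEdge, if_neg (notMem_of_mem_erase_branch hEH he0 hw), if_pos (mem_of_mem_erase hw)]
  · obtain ⟨w, hw, hwe0⟩ := not_subset.mp fun hsub =>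
      hne (eq_of_subset_of_card_le hsub (by rw [hUH e he, hUH e0 he0]))
    have hwV0 : w ∉ V0 := fun h => hwe0 (eq_of_mem_branch hEH he hw h ▸ hv2e0)
    exact prod_eq_zero hw (by rw [fillEdge, if_neg hwV0, if_neg hwe0])

lemma powerSum_fillEdge [Fintype V] (hEH : ∀ e ∈ EH, e ∩ V0 ⊆ {v2}) (hUH : Uniform EH k)
    (hk0 : 0 < k) (hv2 : v2 ∈ V0) (he0 : e0 ∈ EH) (hv2e0 : v2 ∈ e0) (x : V → ℝ) (t : ℝ) :
    powerSum k (fillEdge V0 e0 x t) = ∑ w ∈ V0, x w ^ k + (k - 1 : ℕ) * t ^ k := by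
  have hsplit : ∀ w, fillEdge V0 e0 x t w ^ k
      = (if w ∈ V0 then x w ^ k else 0) + (if w ∈ e0.erase v2 then t ^ k else 0) := by
    intro w
    by_cases hw : w ∈ V0
    · have : w ∉ e0.erase v2 := fun h => notMem_of_mem_erase_branch hEH he0 h hw
      simp [fillEdge, hw, this]
    · have : w ∈ e0.erase v2 ↔ w ∈ e0 := ⟨mem_of_mem_erase, fun h =>
        mem_erase.mpr ⟨fun h' => hw (h' ▸ hv2), h⟩⟩
      by_cases hw0 : w ∈ e0 <;> simp [fillEdge, hw, hw0, this, zero_pow hk0.ne']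
  rw [powerSum, sum_congr rfl fun w _ => hsplit w, sum_add_distrib, sum_ite_mem, sum_ite_mem,
    univ_inter, univ_inter, sum_const, card_erase_of_mem hv2e0, hUH e0 he0, nsmul_eq_mul]

lemma linkSum_branch_ne_zero [Fintype V] (hE0 : ∀ e ∈ E0, e ⊆ V0)
    (hEH : ∀ e ∈ EH, e ∩ V0 ⊆ {v2}) (hU : Uniform (E0 ∪ EH) k) (hk : Even k) (hk0 : 0 < k)
    (hk2 : 2 ≤ k) (hv2 : v2 ∈ V0) (hroot : ∃ e ∈ EH, v2 ∈ e) {lam : ℝ} {x : V → ℝ}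
    (hle : ∀ u, lam * powerSum k u ≤ k * edgeForm (E0 ∪ EH) u) (hx : isEig (E0 ∪ EH) k lam x)
    (hxv2 : x v2 ≠ 0) : linkSum EH v2 x ≠ 0 := by
  intro hS
  obtain ⟨e0, he0, hv2e0⟩ := hroot
  have hUH := (uniform_union_iff.mp hU).2
  have hcore := hx.mul_sum_pow_core hE0 hEH hU hk0 hk2 hv2
  obtain ⟨t, ht⟩ := exists_mul_pow_lt hk hk0 hxv2 lam
  have h := hle (fillEdge V0 e0 x t)
  rw [edgeForm_fillEdge hE0 hEH hUH hk2 hv2 he0 hv2e0, powerSum_fillEdge hEH hUH hk0 hv2 he0 hv2e0,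
    mul_add, mul_add] at h
  rw [hS, mul_zero, add_zero] at hcore
  linarith

end Branch

theorem stmt12_general [Fintype V] [DecidableEq V]
    (V0 : Finset V) (v1 v2 : V) (E0 EH : Finset (Finset V)) (k : ℕ)
    (hk : Even k) (hk0 : 0 < k)
    (hv1 : v1 ∈ V0) (hv2 : v2 ∈ V0) (hne : v1 ≠ v2)
    (hE0 : ∀ e ∈ E0, e ⊆ V0) (hEH : ∀ e ∈ EH, e ∩ V0 ⊆ {v2})
    (hU : Uniform (E0 ∪ EH) k)
    (hroot : ∃ e ∈ EH, v2 ∈ e)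
    (x : V → ℝ) (hx : IsFirstEigvec (E0 ∪ EH) k x) (hge : |x v2| ≤ |x v1|) :
    lamMin (E0 ∪ EH.image (fun e => if v2 ∈ e then insert v1 (e.erase v2) else e)) k
      ≤ lamMin (E0 ∪ EH) k ∧
    (x v2 ≠ 0 →
      lamMin (E0 ∪ EH.image (fun e => if v2 ∈ e then insert v1 (e.erase v2) else e)) k
        < lamMin (E0 ∪ EH) k) := by
  have : Nonempty V := ⟨v1⟩
  obtain ⟨hx0, hxeig⟩ := hx
  have hk2 : 2 ≤ k := by obtain ⟨m, rfl⟩ := hk; omega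
  obtain ⟨hU0, hUH⟩ := uniform_union_iff.mp hU
  have hU' : Uniform (E0 ∪ EH.image (relocate v1 v2)) k := uniform_union_iff.mpr
    ⟨hU0, hUH.image_relocate fun e he h => hne (eq_of_mem_branch hEH he h hv1)⟩
  obtain ⟨y, hyx, hGy, hQ⟩ :=
    exists_powerSum_eq_edgeForm_relocate_le hE0 hEH hUH hk hk0 hk2 hv1 hne hge
  have hQy : k * edgeForm (E0 ∪ EH.image (relocate v1 v2)) y ≤
      lamMin (E0 ∪ EH) k * powerSum k y := by
    rw [hGy, ← hxeig.natCast_mul_edgeForm hk0 hU]; gcongr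
  have hbound := lamMin_mul_powerSum_le hU' hk hk0
  have hle := le_of_mul_le_mul_right ((hbound y).trans hQy) (hGy ▸ powerSum_pos hk hx0)
  refine ⟨hle, fun hxv2 => hle.lt_of_ne fun heq => ?_⟩
  rw [heq] at hbound
  have hyeig := isEig_of_forall_mul_powerSum_le hk0 hbound (le_antisymm hQy (hbound y))
  exact linkSum_branch_ne_zero hE0 hEH hU hk hk0 hk2 hv2 hroot
    (lamMin_mul_powerSum_le hU hk hk0) hxeig hxv2
    (linkSum_branch_eq_zero_of_isEig hE0 hEH hUH hk2 hv2 hne hxeig hyeig hyx)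

/-- Relocating a branch `H` from `v₂` to `v₁`: if `x` is a first eigenvector of
`G = G₀(v₂) ⋄ H(u)` with `|x v₁| ≥ |x v₂|`, then `λ_min(G̃) ≤ λ_min(G)` for
`G̃ = G₀(v₁) ⋄ H(u)`, with strict inequality when `x v₂ ≠ 0`. -/
theorem stmt12 [Fintype V] [DecidableEq V]
    (V0 : Finset V) (v1 v2 : V) (E0 EH : Finset (Finset V)) (k : ℕ)
    (hk : Even k) (hk0 : 0 < k)
    (hv1 : v1 ∈ V0) (hv2 : v2 ∈ V0) (hne : v1 ≠ v2)
    (hE0 : ∀ e ∈ E0, e ⊆ V0) (hEH : ∀ e ∈ EH, e ∩ V0 ⊆ {v2})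
    (hU : Uniform (E0 ∪ EH) k)
    (hconn : HConnected (E0 ∪ EH))
    (hconnT : HConnected (E0 ∪ EH.image (fun e => if v2 ∈ e then insert v1 (e.erase v2) else e)))
    (hE0ne : E0.Nonempty) (hEHne : EH.Nonempty) (hroot : ∃ e ∈ EH, v2 ∈ e)
    (x : V → ℝ) (hx : IsFirstEigvec (E0 ∪ EH) k x) (hge : |x v2| ≤ |x v1|) :
    lamMin (E0 ∪ EH.image (fun e => if v2 ∈ e then insert v1 (e.erase v2) else e)) k
      ≤ lamMin (E0 ∪ EH) k ∧
    (x v2 ≠ 0 →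
      lamMin (E0 ∪ EH.image (fun e => if v2 ∈ e then insert v1 (e.erase v2) else e)) k
        < lamMin (E0 ∪ EH) k) :=
  stmt12_general V0 v1 v2 E0 EH k hk hk0 hv1 hv2 hne hE0 hEH hU hroot x hx hge
end

section
/- Every hypertree (connected acyclic k-uniform hypergraph) is odd-bipartite when k is even. -/
open Finset BigOperators

variable {V : Type*}

/-- The bipartite incidence graph of a hypergraph: vertices on one side, edges on the other,
with `v` adjacent to `e` iff `v ∈ e`. -/
def IncGraph [DecidableEq V] (E : Finset (Finset V)) : SimpleGraph (V ⊕ Finset V) where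
  Adj a b := (∃ v e, a = Sum.inl v ∧ b = Sum.inr e ∧ e ∈ E ∧ v ∈ e) ∨
             (∃ v e, a = Sum.inr e ∧ b = Sum.inl v ∧ e ∈ E ∧ v ∈ e)
  symm := by
    constructor
    rintro a b (⟨v, e, rfl, rfl, he, hv⟩ | ⟨v, e, rfl, rfl, he, hv⟩)
    · exact Or.inr ⟨v, e, rfl, rfl, he, hv⟩
    · exact Or.inl ⟨v, e, rfl, rfl, he, hv⟩
  loopless := by
    constructor
    rintro a (⟨v, e, h1, h2, _, _⟩ | ⟨v, e, h1, h2, _, _⟩) <;> subst h1 <;> simp at h2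

/-- A hypertree: a connected and acyclic hypergraph (acyclicity of the incidence graph). -/
def IsHypertree [DecidableEq V] (E : Finset (Finset V)) : Prop :=
  HConnected E ∧ (IncGraph E).IsAcyclic

section Aux
variable [DecidableEq V]

private lemma adj_isLeft {E : Finset (Finset V)} {a b : V ⊕ Finset V}
    (h : (IncGraph E).Adj a b) : a.isLeft = !b.isLeft := by
  rcases h with ⟨v, e, rfl, rfl, _, _⟩ | ⟨v, e, rfl, rfl, _, _⟩ <;> rfl

private lemma walk_parity {E : Finset (Finset V)} {a b : V ⊕ Finset V}
    (w : (IncGraph E).Walk a b) : Even w.length ↔ a.isLeft = b.isLeft := by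
  induction w with
  | nil => simp
  | cons h p ih =>
    have hs := adj_isLeft h
    rw [SimpleGraph.Walk.length_cons, Nat.even_add_one, ih, hs]
    cases Sum.isLeft _ <;> cases Sum.isLeft _ <;> simp_all

private lemma concat_isPath {E : Finset (Finset V)} {a b c : V ⊕ Finset V}
    {p : (IncGraph E).Walk a b} (hp : p.IsPath) (h : (IncGraph E).Adj b c)
    (hc : c ∉ p.support) : (p.concat h).IsPath := by
  rw [← SimpleGraph.Walk.isPath_reverse_iff, SimpleGraph.Walk.reverse_concat,
    SimpleGraph.Walk.cons_isPath_iff]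
  exact ⟨(SimpleGraph.Walk.isPath_reverse_iff p).mpr hp, by
    rwa [SimpleGraph.Walk.support_reverse, List.mem_reverse]⟩

end Aux

/-- Every `k`-uniform hypertree with `k` even is odd-bipartite. -/
theorem stmt13 [Fintype V] [DecidableEq V] (E : Finset (Finset V)) (k : ℕ)
    (hk : Even k) (hk0 : 0 < k) (hU : Uniform E k) (ht : IsHypertree E) :
    ∃ S : Finset V, ∀ e ∈ E, Odd ((e ∩ S).card) := by
  classical
  obtain ⟨hconn, hacyc⟩ := ht
  by_cases hE : E = ∅
  · exact ⟨∅, by simp [hE]⟩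
  obtain ⟨e0, he0⟩ := Finset.nonempty_iff_ne_empty.mpr hE
  obtain ⟨r, hr⟩ := Finset.card_pos.mp (by rw [hU e0 he0]; exact hk0)
  set G := IncGraph E with hG
  -- adjacency between vertex and containing edge
  have hadj : ∀ {v : V} {e : Finset V}, e ∈ E → v ∈ e → G.Adj (Sum.inl v) (Sum.inr e) :=
    fun {v e} he hv => Or.inl ⟨v, e, rfl, rfl, he, hv⟩
  -- reachability from root
  have hreachV : ∀ v : V, G.Reachable (Sum.inl r) (Sum.inl v) := by
    intro v
    have h := hconn r v
    induction h with
    | refl => exact SimpleGraph.Reachable.refl _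
    | tail _ hab ih =>
      obtain ⟨hne, e, he, ha, hb⟩ := hab
      exact ih.trans ((SimpleGraph.Adj.reachable (hadj he ha)).trans
        (SimpleGraph.Adj.reachable (hadj he hb).symm))
  have hreachE : ∀ e ∈ E, G.Reachable (Sum.inl r) (Sum.inr e) := by
    intro e he
    obtain ⟨v, hv⟩ := Finset.card_pos.mp (by rw [hU e he]; exact hk0)
    exact (hreachV v).trans (SimpleGraph.Adj.reachable (hadj he hv))
  -- parity of distances
  have hparV : ∀ v : V, Even (G.dist (Sum.inl r) (Sum.inl v)) := by
    intro v
    obtain ⟨p, _, hlen⟩ := (hreachV v).exists_path_of_dist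
    rw [← hlen]
    exact (walk_parity p).mpr rfl
  have hparE : ∀ e ∈ E, ¬ Even (G.dist (Sum.inl r) (Sum.inr e)) := by
    intro e he hev
    obtain ⟨p, _, hlen⟩ := (hreachE e he).exists_path_of_dist
    rw [← hlen] at hev
    simpa using (walk_parity p).mp hev
  -- every vertex of an edge is at distance d(e) ± 1
  have hdich : ∀ e ∈ E, ∀ v ∈ e,
      G.dist (Sum.inl r) (Sum.inl v) + 1 = G.dist (Sum.inl r) (Sum.inr e) ∨ G.dist (Sum.inl r) (Sum.inl v) = G.dist (Sum.inl r) (Sum.inr e) + 1 := by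
    intro e he v hv
    have h1 : G.dist (Sum.inl r) (Sum.inl v) ≤ G.dist (Sum.inl r) (Sum.inr e) + 1 := by
      obtain ⟨p, _, hlen⟩ := (hreachE e he).exists_path_of_dist
      have := SimpleGraph.dist_le (p.concat (hadj he hv).symm)
      rwa [SimpleGraph.Walk.length_concat, hlen] at this
    have h2 : G.dist (Sum.inl r) (Sum.inr e) ≤ G.dist (Sum.inl r) (Sum.inl v) + 1 := by
      obtain ⟨p, _, hlen⟩ := (hreachV v).exists_path_of_dist
      have := SimpleGraph.dist_le (p.concat (hadj he hv))
      rwa [SimpleGraph.Walk.length_concat, hlen] at this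
    have hne : G.dist (Sum.inl r) (Sum.inl v) ≠ G.dist (Sum.inl r) (Sum.inr e) := fun h => hparE e he (h ▸ hparV v)
    omega
  -- existence of a parent vertex
  have hex : ∀ e ∈ E, ∃ v ∈ e, G.dist (Sum.inl r) (Sum.inl v) + 1 = G.dist (Sum.inl r) (Sum.inr e) := by
    intro e he
    obtain ⟨p, _, hlen⟩ := (hreachE e he).exists_path_of_dist
    obtain ⟨c, hac, p', hp'⟩ := SimpleGraph.Walk.exists_eq_cons_of_ne
      (by simp : (Sum.inr e : V ⊕ Finset V) ≠ Sum.inl r) p.reverse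
    rcases hac with ⟨v, f, h1, h2, _, _⟩ | ⟨v, f, h1, h2, hf, hvf⟩
    · exact absurd h1 (by simp)
    obtain rfl : e = f := by simpa using h1
    subst h2
    refine ⟨v, hvf, ?_⟩
    have hlc : G.dist (Sum.inl r) (Sum.inl v) ≤ p.length - 1 := by
      have := SimpleGraph.dist_le p'.reverse
      have hlp : p'.length = p.length - 1 := by
        have := congrArg SimpleGraph.Walk.length hp'
        rw [SimpleGraph.Walk.length_reverse] at this
        have h' : p.length = p'.length + 1 := this
        omega
      rwa [SimpleGraph.Walk.length_reverse, hlp] at this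
    have h2 : G.dist (Sum.inl r) (Sum.inr e) ≤ G.dist (Sum.inl r) (Sum.inl v) + 1 := by
      obtain ⟨q, _, hlenq⟩ := (hreachV v).exists_path_of_dist
      have := SimpleGraph.dist_le (q.concat (hadj hf hvf))
      rwa [SimpleGraph.Walk.length_concat, hlenq] at this
    have hpos : 0 < G.dist (Sum.inl r) (Sum.inr e) := by
      rcases Nat.eq_zero_or_pos (G.dist (Sum.inl r) (Sum.inr e)) with h|h
      · exact absurd (by rw [h]; exact Even.zero) (hparE e he)
      · exact h
    omega
  -- uniqueness of the parent vertex
  have huniq : ∀ e ∈ E, ∀ u ∈ e, ∀ v ∈ e,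
      G.dist (Sum.inl r) (Sum.inl u) + 1 = G.dist (Sum.inl r) (Sum.inr e) → G.dist (Sum.inl r) (Sum.inl v) + 1 = G.dist (Sum.inl r) (Sum.inr e) → u = v := by
    intro e he u hu v hv hdu hdv
    by_contra hne
    obtain ⟨pu, hpu, hlu⟩ := (hreachV u).exists_path_of_dist
    obtain ⟨pv, hpv, hlv⟩ := (hreachV v).exists_path_of_dist
    have hnsu : (Sum.inr e : V ⊕ Finset V) ∉ pu.support := by
      intro hmem
      have := SimpleGraph.Walk.length_takeUntil_le pu hmem
      have := SimpleGraph.dist_le (pu.takeUntil _ hmem)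
      omega
    have hnsv : (Sum.inr e : V ⊕ Finset V) ∉ pv.support := by
      intro hmem
      have := SimpleGraph.Walk.length_takeUntil_le pv hmem
      have := SimpleGraph.dist_le (pv.takeUntil _ hmem)
      omega
    have hPu : (pu.concat (hadj he hu)).IsPath := concat_isPath hpu _ hnsu
    have hPv : (pv.concat (hadj he hv)).IsPath := concat_isPath hpv _ hnsv
    have heq : (⟨_, hPu⟩ : G.Path (Sum.inl r) (Sum.inr e)) = ⟨_, hPv⟩ :=
      SimpleGraph.isAcyclic_iff_path_unique.mp hacyc _ _
    have hweq : pu.concat (hadj he hu) = pv.concat (hadj he hv) := congrArg Subtype.val heq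
    have hsupp : (pu.concat (hadj he hu)).support = (pv.concat (hadj he hv)).support := by
      rw [hweq]
    have humem : (Sum.inl u : V ⊕ Finset V) ∈ pv.support := by
      have : (Sum.inl u : V ⊕ Finset V) ∈ (pu.concat (hadj he hu)).support := by
        rw [SimpleGraph.Walk.support_concat, List.mem_append]
        exact Or.inl (SimpleGraph.Walk.end_mem_support pu)
      rw [hsupp, SimpleGraph.Walk.support_concat,
        List.mem_append] at this
      rcases this with h | h
      · exact h
      · simp at h
    -- u appears in shortest path to v at full distance, so u = v
    have htake := SimpleGraph.Walk.length_takeUntil_le pv humem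
    have hdist := SimpleGraph.dist_le (pv.takeUntil _ humem)
    have hspec := congrArg SimpleGraph.Walk.length (SimpleGraph.Walk.take_spec pv humem)
    rw [SimpleGraph.Walk.length_append] at hspec
    have hdrop0 : (pv.dropUntil _ humem).length = 0 := by omega
    exact hne (by simpa using SimpleGraph.Walk.eq_of_length_eq_zero hdrop0)
  -- the bipartition
  refine ⟨Finset.univ.filter (fun v => G.dist (Sum.inl r) (Sum.inl v) % 4 = 0), ?_⟩
  intro e he
  obtain ⟨u, hu, hpar⟩ := hex e he
  have hcardE := hU e he
  have hinter : e ∩ Finset.univ.filter (fun v => G.dist (Sum.inl r) (Sum.inl v) % 4 = 0)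
      = e.filter (fun v => G.dist (Sum.inl r) (Sum.inl v) % 4 = 0) := by
    ext x; simp [Finset.mem_filter, Finset.mem_inter]
  rw [hinter]
  have hmod : G.dist (Sum.inl r) (Sum.inr e) % 4 = 1 ∨ G.dist (Sum.inl r) (Sum.inr e) % 4 = 3 := by
    have := hparE e he
    rw [Nat.even_iff] at this
    omega
  rcases hmod with hmod | hmod
  · -- parent at depth ≡ 0 mod 4, children ≡ 2: intersection = {u}
    have : e.filter (fun v => G.dist (Sum.inl r) (Sum.inl v) % 4 = 0) = {u} := by
      ext x
      simp only [Finset.mem_filter, Finset.mem_singleton]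
      constructor
      · rintro ⟨hx, hx4⟩
        rcases hdich e he x hx with h | h
        · exact huniq e he x hx u hu h hpar
        · omega
      · rintro rfl
        exact ⟨hu, by omega⟩
    rw [this]
    exact ⟨0, rfl⟩
  · -- parent ≡ 2, children ≡ 0 mod 4: intersection = e \ {u}
    have : e.filter (fun v => G.dist (Sum.inl r) (Sum.inl v) % 4 = 0) = e.erase u := by
      ext x
      simp only [Finset.mem_filter, Finset.mem_erase]
      constructor
      · rintro ⟨hx, hx4⟩
        refine ⟨fun hxu => ?_, hx⟩
        subst hxu; omega
      · rintro ⟨hxu, hx⟩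
        rcases hdich e he x hx with h | h
        · exact absurd (huniq e he x hx u hu h hpar) hxu
        · exact ⟨hx, by omega⟩
    rw [this, Finset.card_erase_of_mem hu, hcardE]
    obtain ⟨m, rfl⟩ := hk
    rw [Nat.odd_iff]
    omega
end

section
/- For k even, the complete k-uniform hypergraph K_n^k on n ≥ k+1 vertices is non-odd-bipartite. -/
open Finset BigOperators

variable {V : Type*}

/-!
Inside any `k + 1` vertices `T`, the `k`-sets `T \ {x}` meet `S` in `|T ∩ S| - 1` points when
`x ∈ S` and in `|T ∩ S|` points otherwise. If `T` has points both in and outside `S`, both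
values occur and one of them is even; if `T ⊆ S` the first value is `k`, which is even.
-/

namespace Finset

variable [DecidableEq V]

theorem exists_mem_even_card_erase_inter {k : ℕ} (hk : Even k) {T : Finset V}
    (hT : T.card = k + 1) (S : Finset V) : ∃ x ∈ T, Even ((T.erase x ∩ S).card) := by
  by_cases hTS : T ⊆ S
  · obtain ⟨x, hx⟩ : T.Nonempty := card_pos.mp (by omega)
    refine ⟨x, hx, ?_⟩
    rwa [inter_eq_left.mpr ((erase_subset x T).trans hTS), card_erase_of_mem hx, hT]
  obtain ⟨y, hyT, hyS⟩ := not_subset.mp hTS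
  rcases Nat.even_or_odd (T ∩ S).card with heven | hodd
  · refine ⟨y, hyT, ?_⟩
    rwa [erase_inter, erase_eq_of_notMem (fun h => hyS (mem_inter.mp h).2)]
  · obtain ⟨x, hx⟩ : (T ∩ S).Nonempty := card_pos.mp hodd.pos
    refine ⟨x, (mem_inter.mp hx).1, ?_⟩
    rw [erase_inter, card_erase_of_mem hx]
    exact Nat.Odd.sub_odd hodd odd_one

end Finset

theorem stmt14_general [Fintype V] [DecidableEq V] (k : ℕ) (hk : Even k)
    (hn : k + 1 ≤ Fintype.card V) :
    ¬ ∃ S : Finset V, ∀ e ∈ Finset.powersetCard k (Finset.univ : Finset V),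
        Odd ((e ∩ S).card) := by
  rintro ⟨S, hS⟩
  obtain ⟨T, -, hT⟩ := exists_subset_card_eq (s := (univ : Finset V)) hn
  obtain ⟨x, hx, heven⟩ := exists_mem_even_card_erase_inter hk hT S
  have hedge : T.erase x ∈ powersetCard k univ := by
    rw [mem_powersetCard, card_erase_of_mem hx, hT]
    exact ⟨subset_univ _, rfl⟩
  exact Nat.not_odd_iff_even.mpr heven (hS _ hedge)

/-- For `k` even, the complete `k`-uniform hypergraph on `n ≥ k+1` vertices is
non-odd-bipartite. -/
theorem stmt14 [Fintype V] [DecidableEq V] (k : ℕ) (hk : Even k) (hk0 : 0 < k)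
    (hn : k + 1 ≤ Fintype.card V) :
    ¬ ∃ S : Finset V, ∀ e ∈ Finset.powersetCard k (Finset.univ : Finset V),
        Odd ((e ∩ S).card) :=
  stmt14_general k hk hn
end

section
/- Let k ≥ 4 be even. The generalized power hypergraph G^{k,k/2} of a simple graph G is odd-bipartite if and only if G is bipartite. In particular, for an odd cycle C_{2n+1}, the hypergraph C_{2n+1}^{k,k/2} is non-odd-bipartite. -/
/-!
Write `S_v` for the part of a vertex set `S` of `G^{k,k/2}` lying over `v`. An edge `S_u ∪ S_v`
meets `S` in `|S_u| + |S_v|` vertices, so `S` is odd-bipartite exactly when the parity of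
`|S_v|` is a proper two-colouring of `G`; conversely a two-colouring `T` is realised by taking
one vertex over each `v ∈ T`. On the odd cycle `ZMod (2n+1)` a two-colouring would alternate
along `j ↦ j + 1`, forcing `2n + 1` to be even.
-/

open Finset BigOperators Classical

/-- The edge set of the generalized power hypergraph `G^{k,k/2}`: each vertex `v` of `G`
is blown up into the set `{v} × Fin (k/2)`, and each edge `uv` of `G` becomes the
`k`-set `({u,v}) × Fin (k/2)`. -/
noncomputable def powEdges {W : Type*} [Fintype W] [DecidableEq W] (G : SimpleGraph W)
    (k : ℕ) : Finset (Finset (W × Fin (k / 2))) :=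
  Finset.image
    (fun p : W × W => ({p.1, p.2} : Finset W) ×ˢ (Finset.univ : Finset (Fin (k / 2))))
    (Finset.univ.filter (fun p : W × W => G.Adj p.1 p.2))

section Fibers

variable {W α : Type*} [DecidableEq W]

lemma card_product_univ_inter [Fintype α] [DecidableEq α] (T : Finset W)
    (S : Finset (W × α)) :
    ((T ×ˢ univ) ∩ S).card = ∑ v ∈ T, (S.filter (·.1 = v)).card := by
  rw [card_eq_sum_card_fiberwise (f := Prod.fst) (t := T) (fun x hx => (mem_product.1
    (mem_inter.1 hx).1).1)]
  refine sum_congr rfl fun v hv => congrArg card ?_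
  ext ⟨w, i⟩
  simp only [mem_filter, mem_inter, mem_product, mem_univ, and_true]
  constructor
  · rintro ⟨⟨-, hS⟩, rfl⟩
    exact ⟨hS, rfl⟩
  · rintro ⟨hS, rfl⟩
    exact ⟨⟨hv, hS⟩, rfl⟩

lemma card_filter_fst_eq_product_singleton (A : Finset W) (i : α) (v : W) :
    ((A ×ˢ {i}).filter (·.1 = v)).card = if v ∈ A then 1 else 0 := by
  rw [filter_product_left (· = v), card_product, card_singleton, mul_one, filter_eq',
    apply_ite card, card_singleton, card_empty]

end Fibers

lemma mem_powEdges {W : Type*} [Fintype W] [DecidableEq W] {G : SimpleGraph W} {k : ℕ}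
    {e : Finset (W × Fin (k / 2))} :
    e ∈ powEdges G k ↔ ∃ u v, G.Adj u v ∧ e = ({u, v} : Finset W) ×ˢ univ := by
  simp only [powEdges, mem_image, mem_filter, mem_univ, true_and, Prod.exists]
  exact exists₂_congr fun u v => and_congr_right fun _ => eq_comm

lemma forall_odd_card_inter_powEdges_iff {W : Type*} [Fintype W] [DecidableEq W]
    (G : SimpleGraph W) (k : ℕ) (S : Finset (W × Fin (k / 2))) :
    (∀ e ∈ powEdges G k, Odd (e ∩ S).card) ↔
      ∀ u v, G.Adj u v → Odd ((S.filter (·.1 = u)).card + (S.filter (·.1 = v)).card) := by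
  constructor
  · intro h u v huv
    rw [← sum_pair (f := fun w => (S.filter (·.1 = w)).card) huv.ne, ← card_product_univ_inter]
    exact h _ (mem_powEdges.2 ⟨u, v, huv, rfl⟩)
  · intro h e he
    obtain ⟨u, v, huv, rfl⟩ := mem_powEdges.1 he
    rw [card_product_univ_inter, sum_pair huv.ne]
    exact h u v huv

theorem powEdges_oddBipartite_iff {W : Type*} [Fintype W] [DecidableEq W] (G : SimpleGraph W)
    {k : ℕ} (hk : 2 ≤ k) :
    (∃ S : Finset (W × Fin (k / 2)), ∀ e ∈ powEdges G k, Odd ((e ∩ S).card)) ↔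
      ∃ T : Set W, ∀ u v, G.Adj u v → (u ∈ T ↔ v ∉ T) := by
  simp only [forall_odd_card_inter_powEdges_iff]
  constructor
  · rintro ⟨S, hS⟩
    refine ⟨{v | Odd (S.filter (·.1 = v)).card}, fun u v huv => ?_⟩
    have := Nat.odd_add.1 (hS u v huv)
    simp only [Set.mem_ofPred_eq, ← Nat.not_even_iff_odd] at this ⊢
    tauto
  · rintro ⟨T, hT⟩
    refine ⟨univ.filter (· ∈ T) ×ˢ {⟨0, by omega⟩}, fun u v huv => ?_⟩
    simp only [card_filter_fst_eq_product_singleton, mem_filter, mem_univ, true_and]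
    by_cases hu : u ∈ T
    · simp [hu, (hT u v huv).1 hu]
    · simp [hu, not_not.1 (mt (hT u v huv).2 hu)]

lemma mem_iff_even_of_mem_iff_add_one_notMem {M : Type*} [AddMonoidWithOne M] {T : Set M}
    (hT : ∀ j, j ∈ T ↔ j + 1 ∉ T) (m : ℕ) : (m : M) ∈ T ↔ ((0 : M) ∈ T ↔ Even m) := by
  induction m with
  | zero => simp
  | succ m ih =>
    have := hT m
    rw [Nat.cast_succ, Nat.even_add_one]
    tauto

theorem not_exists_twoColoring_oddCycle {m : ℕ} (hm : Odd m) (hm1 : m ≠ 1) :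
    ¬ ∃ T : Set (ZMod m), ∀ u v,
      (SimpleGraph.fromRel (fun i j : ZMod m => i = j + 1)).Adj u v → (u ∈ T ↔ v ∉ T) := by
  rintro ⟨T, hT⟩
  have : Fact (1 < m) := ⟨by obtain ⟨r, rfl⟩ := hm; omega⟩
  have hstep : ∀ j : ZMod m, j ∈ T ↔ j + 1 ∉ T := by
    intro j
    have hadj : (SimpleGraph.fromRel (fun i j : ZMod m => i = j + 1)).Adj (j + 1) j :=
      (SimpleGraph.fromRel_adj _ _ _).2 ⟨fun h => one_ne_zero (add_eq_left.1 h), Or.inl rfl⟩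
    have := hT _ _ hadj
    tauto
  have := mem_iff_even_of_mem_iff_add_one_notMem hstep m
  rw [ZMod.natCast_self] at this
  exact Nat.not_even_iff_odd.2 hm (by tauto)

theorem stmt15_general {W : Type*} [Fintype W] [DecidableEq W] (G : SimpleGraph W) (k n : ℕ)
    (hk4 : 4 ≤ k) (hn : 1 ≤ n) :
    ((∃ S : Finset (W × Fin (k / 2)), ∀ e ∈ powEdges G k, Odd ((e ∩ S).card)) ↔
      (∃ T : Set W, ∀ u v, G.Adj u v → (u ∈ T ↔ v ∉ T))) ∧
    ¬ (∃ S : Finset (ZMod (2 * n + 1) × Fin (k / 2)),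
        ∀ e ∈ powEdges (SimpleGraph.fromRel (fun i j : ZMod (2 * n + 1) => i = j + 1)) k,
          Odd ((e ∩ S).card)) := by
  refine ⟨powEdges_oddBipartite_iff G (by omega), ?_⟩
  rw [powEdges_oddBipartite_iff _ (by omega)]
  exact not_exists_twoColoring_oddCycle (odd_two_mul_add_one n) (by omega)

/-- For even `k ≥ 4`, the power hypergraph `G^{k,k/2}` is odd-bipartite iff `G` is bipartite;
in particular the power of an odd cycle `C_{2n+1}` is non-odd-bipartite. -/
theorem stmt15 {W : Type*} [Fintype W] [DecidableEq W] (G : SimpleGraph W) (k n : ℕ)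
    (hk : Even k) (hk4 : 4 ≤ k) (hn : 1 ≤ n) :
    ((∃ S : Finset (W × Fin (k / 2)), ∀ e ∈ powEdges G k, Odd ((e ∩ S).card)) ↔
      (∃ T : Set W, ∀ u v, G.Adj u v → (u ∈ T ↔ v ∉ T))) ∧
    ¬ (∃ S : Finset (ZMod (2 * n + 1) × Fin (k / 2)),
        ∀ e ∈ powEdges (SimpleGraph.fromRel (fun i j : ZMod (2 * n + 1) => i = j + 1)) k,
          Odd ((e ∩ S).card)) :=
  stmt15_general G k n hk4 hn
end

section
/- Let k be even, G = G_0(u) ⋄ H(u) a connected k-uniform coalescence, λ = λ_min(G) and x a first eigenvector of G. Then the quadratic-form identity (A(G_0) - λI)(x|_{G_0})^k = -x_u · Σ_{e ∈ E_H(u)} Π_{v ∈ e\{u}} x_v = -α_H(x) holds, where α_H(x) = Σ_{e ∈ E_H(u)} Π_{v∈e} x_v. -/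
open Finset BigOperators

variable {V : Type*}

/-- Quadratic-form identity: `(A(G₀) - λI)(x|_{G₀})^k = -x_u · ∑_{e ∈ E_H(u)} ∏_{v ∈ e∖{u}} x v = -α_H(x)` for a first eigenvector `x` of `G = G₀(u) ⋄ H(u)` with `λ = λ_min(G)`. -/
theorem stmt18 [Fintype V] [DecidableEq V]
    (V0 VH : Finset V) (u : V) (E0 EH : Finset (Finset V)) (k : ℕ)
    (hk : Even k) (hk0 : 0 < k)
    (hI : V0 ∩ VH = {u}) (hcover : V0 ∪ VH = Finset.univ)
    (hE0 : ∀ e ∈ E0, e ⊆ V0) (hEH : ∀ e ∈ EH, e ⊆ VH)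
    (hU : Uniform (E0 ∪ EH) k) (hconn : HConnected (E0 ∪ EH))
    (hE0ne : E0.Nonempty) (hEHne : EH.Nonempty)
    (x : V → ℝ) (hx : IsFirstEigvec (E0 ∪ EH) k x) :
    (∑ e ∈ E0, (k : ℝ) * ∏ v ∈ e, x v) - lamMin (E0 ∪ EH) k * (∑ v ∈ V0, x v ^ k)
      = -(x u * ∑ e ∈ EH.filter (fun e => u ∈ e), ∏ w ∈ e.erase u, x w) ∧
    (∑ e ∈ E0, (k : ℝ) * ∏ v ∈ e, x v) - lamMin (E0 ∪ EH) k * (∑ v ∈ V0, x v ^ k)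
      = -(∑ e ∈ EH.filter (fun e => u ∈ e), ∏ v ∈ e, x v) := by
  obtain ⟨hxne, heig⟩ := hx
  obtain ⟨m, hm⟩ := hk
  have hk2 : 2 ≤ k := by omega
  have huV0 : u ∈ V0 := by
    have h : u ∈ V0 ∩ VH := by rw [hI]; exact Finset.mem_singleton_self u
    exact (Finset.mem_inter.mp h).1
  have hdisj : Disjoint E0 EH := by
    rw [Finset.disjoint_left]
    intro e he0 heH
    have hsub : e ⊆ V0 ∩ VH := Finset.subset_inter (hE0 e he0) (hEH e heH)
    rw [hI] at hsub
    have h1 : e.card ≤ 1 := le_trans (Finset.card_le_card hsub) (by simp)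
    have h2 := hU e (Finset.mem_union_left _ he0)
    omega
  have hA : (∑ v ∈ V0, ∑ e ∈ E0.filter (fun e => v ∈ e), x v * ∏ w ∈ e.erase v, x w)
      = ∑ e ∈ E0, (k : ℝ) * ∏ v ∈ e, x v := by
    simp only [Finset.sum_filter]
    rw [Finset.sum_comm]
    refine Finset.sum_congr rfl fun e he => ?_
    have hsub := hE0 e he
    calc (∑ v ∈ V0, if v ∈ e then x v * ∏ w ∈ e.erase v, x w else 0)
        = ∑ v ∈ V0.filter (fun v => v ∈ e), x v * ∏ w ∈ e.erase v, x w :=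
          (Finset.sum_filter _ _).symm
      _ = ∑ v ∈ e, x v * ∏ w ∈ e.erase v, x w := by
          rw [Finset.filter_mem_eq_inter, Finset.inter_eq_right.mpr hsub]
      _ = ∑ _v ∈ e, ∏ w ∈ e, x w :=
          Finset.sum_congr rfl fun v hv => Finset.mul_prod_erase e x hv
      _ = (k : ℝ) * ∏ v ∈ e, x v := by
          rw [Finset.sum_const, hU e (Finset.mem_union_left _ he), nsmul_eq_mul]
  have hB : (∑ v ∈ V0, ∑ e ∈ EH.filter (fun e => v ∈ e), x v * ∏ w ∈ e.erase v, x w)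
      = ∑ e ∈ EH.filter (fun e => u ∈ e), ∏ v ∈ e, x v := by
    simp only [Finset.sum_filter]
    rw [Finset.sum_comm]
    refine Finset.sum_congr rfl fun e he => ?_
    have hsub : V0 ∩ e ⊆ {u} := by
      rw [← hI]; exact Finset.inter_subset_inter le_rfl (hEH e he)
    by_cases hu : u ∈ e
    · have hVe : V0 ∩ e = {u} := Finset.Subset.antisymm hsub
        (Finset.singleton_subset_iff.mpr (Finset.mem_inter.mpr ⟨huV0, hu⟩))
      rw [if_pos hu]
      calc (∑ v ∈ V0, if v ∈ e then x v * ∏ w ∈ e.erase v, x w else 0)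
          = ∑ v ∈ V0.filter (fun v => v ∈ e), x v * ∏ w ∈ e.erase v, x w :=
            (Finset.sum_filter _ _).symm
        _ = ∑ v ∈ ({u} : Finset V), x v * ∏ w ∈ e.erase v, x w := by
            rw [Finset.filter_mem_eq_inter, hVe]
        _ = x u * ∏ w ∈ e.erase u, x w := Finset.sum_singleton _ _
        _ = ∏ v ∈ e, x v := Finset.mul_prod_erase e x hu
    · rw [if_neg hu]
      refine Finset.sum_eq_zero fun v hv => ?_
      rw [if_neg]
      intro hve
      have hvu : v = u := Finset.mem_singleton.mp (hsub (Finset.mem_inter.mpr ⟨hv, hve⟩))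
      exact hu (hvu ▸ hve)
  have main : (∑ e ∈ E0, (k : ℝ) * ∏ v ∈ e, x v)
      + (∑ e ∈ EH.filter (fun e => u ∈ e), ∏ v ∈ e, x v)
      = lamMin (E0 ∪ EH) k * ∑ v ∈ V0, x v ^ k := by
    rw [← hA, ← hB, ← Finset.sum_add_distrib, Finset.mul_sum]
    refine Finset.sum_congr rfl fun v hv => ?_
    have hdf : Disjoint (E0.filter (fun e => v ∈ e)) (EH.filter (fun e => v ∈ e)) :=
      Finset.disjoint_filter_filter hdisj
    rw [← Finset.sum_union hdf, ← Finset.filter_union, ← Finset.mul_sum, heig v]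
    have hp : x v ^ k = x v ^ (k - 1) * x v := by
      rw [← pow_succ]; congr 1; omega
    rw [hp]; ring
  have hprod : (∑ e ∈ EH.filter (fun e => u ∈ e), ∏ v ∈ e, x v)
      = x u * ∑ e ∈ EH.filter (fun e => u ∈ e), ∏ w ∈ e.erase u, x w := by
    rw [Finset.mul_sum]
    exact Finset.sum_congr rfl fun e he =>
      (Finset.mul_prod_erase e x (Finset.mem_filter.mp he).2).symm
  constructor <;> linarith [main, hprod]
end
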